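/- arXiv:2409.06060 — 2 statements merged into one kernel-verified Lean document; each statement's English description precedes it below -/
import Mathlib

section
/- For all λ ∈ (0, 1/2], x ∈ (0, 1/2], and D ∈ [1, ∞), one has ((λx + ψ_E(λ)x²)² / (λx/D − ψ_E(λ)x²)²) · (exp(λx/D − ψ_E(λ)x²) − (λx/D − ψ_E(λ)x²) − 1) ≤ ψ_E(λ)x². -/
noncomputable def psiE (l : ℝ) : ℝ := -Real.log (1 - l) - l

private lemma psi_bounds (l : ℝ) (hl : 0 < l) (hl' : l ≤ 1/2) :
    l^2/2 + l^3/3 + l^4/4 + l^5/5 + l^6/6 + l^7/7 + l^8/8 + l^9/9 - 2*l^10 ≤ psiE l ∧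
    psiE l ≤ l^2/2 + l^3/3 + l^4/4 + l^5/5 + l^6/6 + l^7/7 + l^8/8 + l^9/9 + 2*l^10 := by
  have h1l : (0:ℝ) < 1 - l := by linarith
  have habs : |l| < 1 := by rw [abs_of_pos hl]; linarith
  have h := Real.abs_log_sub_add_sum_range_le habs 9
  rw [abs_of_pos hl] at h
  simp only [Finset.sum_range_succ, Finset.sum_range_zero] at h
  norm_num at h
  have h2 : l^10/(1-l) ≤ 2*l^10 := by
    rw [div_le_iff₀ h1l]
    nlinarith [pow_nonneg hl.le 10]
  have h3 := abs_le.mp (h.trans h2)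
  unfold psiE
  constructor <;> nlinarith [h3.1, h3.2]

private lemma expB (u : ℝ) (h1 : -1/5 ≤ u) (h2 : u ≤ 1/4) :
    Real.exp u - u - 1 ≤ u^2 / (2*(1 - u/3)) := by
  have habs : |u| ≤ 1 := by rw [abs_le]; constructor <;> linarith
  have h := Real.exp_bound habs (n := 4) (by norm_num)
  simp only [Finset.sum_range_succ, Finset.sum_range_zero] at h
  norm_num [Nat.factorial] at h
  have h4 : |u|^4 = u^4 := by rw [← abs_pow, abs_of_nonneg (by positivity)]
  rw [h4] at h
  have hub := (abs_le.mp h).2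
  have hd : (0:ℝ) < 2*(1 - u/3) := by linarith
  rw [le_div_iff₀ hd]
  have hq : 0 ≤ u^4 * (1 + 5*u) := by nlinarith [pow_nonneg (sq_nonneg u) 2]
  nlinarith [mul_nonneg (sub_nonneg.mpr hub) hd.le, hq]

private lemma keyP (l : ℝ) (hl : 0 < l) (hl' : l ≤ 1/2) :
    l^2 ≤ 2*(l^2/2 + l^3/3 + l^4/4 + l^5/5 + l^6/6 + l^7/7 + l^8/8 + l^9/9 - 2*l^10)
      - 4/3*l*(l^2/2 + l^3/3 + l^4/4 + l^5/5 + l^6/6 + l^7/7 + l^8/8 + l^9/9 - 2*l^10)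
      - (l^2/2 + l^3/3 + l^4/4 + l^5/5 + l^6/6 + l^7/7 + l^8/8 + l^9/9 - 2*l^10)^2/12 := by
  have h12 : (0:ℝ) ≤ 1 - 2*l := by linarith
  have hl0 : (0:ℝ) ≤ l := hl.le
  have h0 := mul_nonneg (pow_nonneg hl0 4) (pow_nonneg h12 16)
  have h1 := mul_nonneg (pow_nonneg hl0 5) (pow_nonneg h12 15)
  have h2 := mul_nonneg (pow_nonneg hl0 6) (pow_nonneg h12 14)
  have h3 := mul_nonneg (pow_nonneg hl0 7) (pow_nonneg h12 13)
  have h4 := mul_nonneg (pow_nonneg hl0 8) (pow_nonneg h12 12)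
  have h5 := mul_nonneg (pow_nonneg hl0 9) (pow_nonneg h12 11)
  have h6 := mul_nonneg (pow_nonneg hl0 10) (pow_nonneg h12 10)
  have h7 := mul_nonneg (pow_nonneg hl0 11) (pow_nonneg h12 9)
  have h8 := mul_nonneg (pow_nonneg hl0 12) (pow_nonneg h12 8)
  have h9 := mul_nonneg (pow_nonneg hl0 13) (pow_nonneg h12 7)
  have h10 := mul_nonneg (pow_nonneg hl0 14) (pow_nonneg h12 6)
  have h11 := mul_nonneg (pow_nonneg hl0 15) (pow_nonneg h12 5)
  have h12' := mul_nonneg (pow_nonneg hl0 16) (pow_nonneg h12 4)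
  have h13 := mul_nonneg (pow_nonneg hl0 17) (pow_nonneg h12 3)
  have h14 := mul_nonneg (pow_nonneg hl0 18) (pow_nonneg h12 2)
  have h15 := mul_nonneg (pow_nonneg hl0 19) (pow_nonneg h12 1)
  have h16 := mul_nonneg (pow_nonneg hl0 20) (pow_nonneg h12 0)
  linarith [h0,h1,h2,h3,h4,h5,h6,h7,h8,h9,h10,h11,h12',h13,h14,h15,h16]

private lemma key1 (l ψ : ℝ) (hl : 0 < l) (hl' : l ≤ 1/2)
    (hlb : l^2/2 + l^3/3 + l^4/4 + l^5/5 + l^6/6 + l^7/7 + l^8/8 + l^9/9 - 2*l^10 ≤ ψ)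
    (hub : ψ ≤ l) :
    l^2 + 4/3*l*ψ + ψ^2/12 ≤ 2*ψ := by
  have hP := keyP l hl hl'
  set pl := l^2/2 + l^3/3 + l^4/4 + l^5/5 + l^6/6 + l^7/7 + l^8/8 + l^9/9 - 2*l^10 with hpl
  have hplle : pl ≤ 1/2 := le_trans hlb (by linarith)
  have hfac : 0 ≤ 2 - 4/3*l - (ψ + pl)/12 := by linarith
  nlinarith [mul_nonneg (sub_nonneg.mpr hlb) hfac]

set_option maxHeartbeats 2000000 in
theorem stmt_1 (l x D : ℝ) (hl : 0 < l) (hl' : l ≤ 1/2)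
    (hx : 0 < x) (hx' : x ≤ 1/2) (hD : 1 ≤ D) :
    ((l * x + psiE l * x ^ 2) ^ 2 / (l * x / D - psiE l * x ^ 2) ^ 2) *
        (Real.exp (l * x / D - psiE l * x ^ 2) - (l * x / D - psiE l * x ^ 2) - 1)
      ≤ psiE l * x ^ 2 := by
  obtain ⟨hlb, hub⟩ := psi_bounds l hl hl'
  generalize hψE : psiE l = ψ at hlb hub ⊢
  have hb : ∀ k : ℕ, l^k ≤ (1/2:ℝ)^k := fun k => pow_le_pow_left₀ hl.le hl' k
  have m1 := mul_le_mul_of_nonneg_left (hb 1) hl.le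
  have m2 := mul_le_mul_of_nonneg_left (hb 2) hl.le
  have m3 := mul_le_mul_of_nonneg_left (hb 3) hl.le
  have m4 := mul_le_mul_of_nonneg_left (hb 4) hl.le
  have m5 := mul_le_mul_of_nonneg_left (hb 5) hl.le
  have m6 := mul_le_mul_of_nonneg_left (hb 6) hl.le
  have m7 := mul_le_mul_of_nonneg_left (hb 7) hl.le
  have m8 := mul_le_mul_of_nonneg_left (hb 8) hl.le
  have m9 := mul_le_mul_of_nonneg_left (hb 9) hl.le
  have m10 := mul_le_mul_of_nonneg_left (hb 8) (pow_nonneg hl.le 2)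
  have hψpos : 0 < ψ := by
    linarith only [hlb, m10, pow_pos hl 2, pow_pos hl 3, pow_pos hl 4, pow_pos hl 5,
      pow_pos hl 6, pow_pos hl 7, pow_pos hl 8, pow_pos hl 9]
  have hψle : ψ ≤ l := by linarith only [hl, hub, m1, m2, m3, m4, m5, m6, m7, m8, m9]
  have hppos : 0 < ψ * x ^ 2 := by positivity
  have hx14 : x^2 ≤ 1/4 := by nlinarith [mul_nonneg (by linarith : (0:ℝ) ≤ 1/2 - x) (by linarith : (0:ℝ) ≤ 1/2 + x)]
  have ha4 : l * x ≤ 1/4 := by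
    nlinarith [mul_nonneg (by linarith : (0:ℝ) ≤ 1/2 - l) (by linarith : (0:ℝ) ≤ 1/2 - x)]
  have hp8 : ψ * x ^ 2 ≤ 1/8 := by
    nlinarith [mul_nonneg (by linarith : (0:ℝ) ≤ 1/2 - ψ) (sq_nonneg x),
      mul_nonneg hψpos.le (by linarith : (0:ℝ) ≤ 1/4 - x^2)]
  have haD : l * x / D ≤ l * x := div_le_self (by positivity) hD
  have haD0 : 0 ≤ l * x / D := by positivity
  have hulb : -1/5 ≤ l * x / D - ψ * x ^ 2 := by linarith
  have hule : l * x / D - ψ * x ^ 2 ≤ l * x - ψ * x ^ 2 := by linarith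
  have huub : l * x / D - ψ * x ^ 2 ≤ 1/4 := by linarith only [hule, ha4, hppos]
  -- key polynomial inequality : (a+p)^2 ≤ 2p(1 - (a-p)/3)
  have hk1 : l^2 + 4/3*l*ψ + ψ^2/12 ≤ 2*ψ := key1 l ψ hl hl' hlb hψle
  have hkey : (l * x + ψ * x ^ 2)^2 ≤ 2*(ψ * x ^ 2)*(1 - (l * x - ψ * x ^ 2)/3) := by
    have hx2 : (0:ℝ) < x^2 := by positivity
    have t1 : l^2*x^2 + 4/3*l*ψ*x^2 + ψ^2/12*x^2 ≤ 2*ψ*x^2 := by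
      linarith only [mul_le_mul_of_nonneg_right hk1 (sq_nonneg x)]
    have t2 : 0 ≤ 4/3*l*ψ*x^2*(1 - 2*x) := by
      have h2x : (0:ℝ) ≤ 1 - 2*x := by linarith
      positivity
    have t3 : 0 ≤ ψ^2*x^2*(1/12 - x^2/3) := by
      have := mul_nonneg (sq_nonneg (ψ*x)) (by linarith : (0:ℝ) ≤ 1/12 - x^2/3)
      nlinarith [this]
    nlinarith [t1, t2, t3]
  have hE0 : 0 ≤ Real.exp (l * x / D - ψ * x ^ 2) - (l * x / D - ψ * x ^ 2) - 1 := by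
    linarith only [Real.add_one_le_exp (l * x / D - ψ * x ^ 2)]
  have hE := expB (l * x / D - ψ * x ^ 2) hulb huub
  have hd2 : (0:ℝ) < 2*(1 - (l * x - ψ * x ^ 2)/3) := by linarith only [ha4, hppos]
  have hd1 : (0:ℝ) < 2*(1 - (l * x / D - ψ * x ^ 2)/3) := by linarith only [huub]
  rcases eq_or_ne (l * x / D - ψ * x ^ 2) 0 with h0 | h0
  · rw [h0]
    norm_num
    positivity
  · have hu2 : (0:ℝ) < (l * x / D - ψ * x ^ 2)^2 := by positivity
    calc ((l * x + ψ * x ^ 2)^2 / (l * x / D - ψ * x ^ 2)^2) *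
          (Real.exp (l * x / D - ψ * x ^ 2) - (l * x / D - ψ * x ^ 2) - 1)
        ≤ ((l * x + ψ * x ^ 2)^2 / (l * x / D - ψ * x ^ 2)^2) *
          ((l * x / D - ψ * x ^ 2)^2 / (2*(1 - (l * x / D - ψ * x ^ 2)/3))) := by
          apply mul_le_mul_of_nonneg_left hE (by positivity)
      _ = (l * x + ψ * x ^ 2)^2 / (2*(1 - (l * x / D - ψ * x ^ 2)/3)) := by
          rw [div_mul_div_comm,
            mul_comm ((l * x + ψ * x ^ 2) ^ 2) ((l * x / D - ψ * x ^ 2) ^ 2),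
            mul_div_mul_left _ _ hu2.ne']
      _ ≤ (l * x + ψ * x ^ 2)^2 / (2*(1 - (l * x - ψ * x ^ 2)/3)) := by
          apply div_le_div_of_nonneg_left (by positivity) hd2 (by linarith)
      _ ≤ ψ * x ^ 2 := by
          rw [div_le_iff₀ hd2]; linarith [hkey]
end

section
/- For all u ≥ 0, (1 + u)·log(1 + u) − u ≥ u² / (2(1 + u/3)). -/
/-! Write `h u = (1 + u) log (1 + u) - u` and `g u = u² / (2 (1 + u/3))`. Both vanish at `0`, with
`h' u = log (1 + u)` and `g' u = 3u(u + 6) / (2(u + 3)²)`. The classical bound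
`log (1 + u) ≥ 2u / (u + 2)` already dominates `g'`, since the difference of the two fractions
has numerator `u³ ≥ 0`; hence `h - g` is monotone on `[0, ∞)`. -/

open Real Set

lemma hasDerivAt_one_add_mul_log_one_add_sub {x : ℝ} (hx : -1 < x) :
    HasDerivAt (fun t => (1 + t) * log (1 + t) - t) (log (1 + x)) x := by
  have hx' : 1 + x ≠ 0 := by linarith
  have hlin : HasDerivAt (fun t => 1 + t) 1 x := (hasDerivAt_id' x).const_add 1
  refine ((hlin.mul (hlin.log hx')).sub (hasDerivAt_id' x)).congr_deriv ?_
  field_simp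
  ring

lemma hasDerivAt_sq_div_two_mul_one_add_div_three {x : ℝ} (hx : x ≠ -3) :
    HasDerivAt (fun t => t ^ 2 / (2 * (1 + t / 3))) (3 * x * (x + 6) / (2 * (x + 3) ^ 2)) x := by
  have hx' : 2 * (1 + x / 3) ≠ 0 := by
    contrapose! hx
    linarith
  have hden : HasDerivAt (fun t => 2 * (1 + t / 3)) (2 * (1 / 3)) x :=
    (((hasDerivAt_id' x).div_const 3).const_add 1).const_mul 2
  refine ((hasDerivAt_pow 2 x).div hden hx').congr_deriv ?_
  have hx3 : x + 3 ≠ 0 := by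
    contrapose! hx
    linarith
  rw [div_eq_div_iff (pow_ne_zero 2 hx') (mul_ne_zero two_ne_zero (pow_ne_zero 2 hx3))]
  push_cast
  ring

lemma three_mul_mul_add_six_div_le_log_one_add {x : ℝ} (hx : 0 ≤ x) :
    3 * x * (x + 6) / (2 * (x + 3) ^ 2) ≤ log (1 + x) := by
  refine le_trans ?_ (le_log_one_add_of_nonneg hx)
  rw [div_le_div_iff₀ (by positivity) (by positivity)]
  nlinarith [pow_nonneg hx 3]

theorem stmt_7 (u : ℝ) (hu : 0 ≤ u) :
    u ^ 2 / (2 * (1 + u / 3)) ≤ (1 + u) * Real.log (1 + u) - u := by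
  set φ : ℝ → ℝ := fun t => ((1 + t) * log (1 + t) - t) - t ^ 2 / (2 * (1 + t / 3))
  have hφ' : ∀ x ∈ Ici (0 : ℝ),
      HasDerivAt φ (log (1 + x) - 3 * x * (x + 6) / (2 * (x + 3) ^ 2)) x := fun x hx =>
    (hasDerivAt_one_add_mul_log_one_add_sub (by linarith [mem_Ici.mp hx])).sub
      (hasDerivAt_sq_div_two_mul_one_add_div_three (by linarith [mem_Ici.mp hx]))
  have hmono : MonotoneOn φ (Ici 0) := by
    refine monotoneOn_of_hasDerivWithinAt_nonneg (convex_Ici 0)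
      (fun x hx => (hφ' x hx).continuousAt.continuousWithinAt)
      (fun x hx => (hφ' x (interior_subset hx)).hasDerivWithinAt) fun x hx => ?_
    exact sub_nonneg.mpr (three_mul_mul_add_six_div_le_log_one_add (interior_subset hx))
  have h := hmono self_mem_Ici hu hu
  norm_num [φ] at h
  linarith
end
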